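/- arXiv:2410.23094 — 3 statements merged into one kernel-verified Lean document; each statement's English description precedes it below -/
import Mathlib

section
/- For every m ≥ 1, the number of partitions of 2^m into powers of 2 is congruent to 2 modulo 8 if m is odd, and congruent to 4 modulo 8 if m is even and m ≥ 2. -/
/-- The binary partition function: the number of partitions of `n` into powers of 2. -/
noncomputable def binPartition (n : ℕ) : ℕ :=
  Nat.card {p : Nat.Partition n // ∀ i ∈ p.parts, ∃ j : ℕ, i = 2 ^ j}

namespace BinPf

abbrev PP (n : ℕ) := {p : Nat.Partition n // ∀ i ∈ p.parts, ∃ j : ℕ, i = 2 ^ j}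

lemma binPartition_eq (n : ℕ) : binPartition n = Nat.card (PP n) := rfl

instance (n : ℕ) : Finite (PP n) := Subtype.finite

lemma binPartition_zero : binPartition 0 = 1 := by
  rw [binPartition_eq, Nat.card_eq_one_iff_unique]
  constructor
  · constructor
    intro p q
    apply Subtype.ext; apply Nat.Partition.ext
    have hp : ∀ x ∈ p.1.parts, x = 0 := Multiset.sum_eq_zero_iff.mp p.1.parts_sum
    have hq : ∀ x ∈ q.1.parts, x = 0 := Multiset.sum_eq_zero_iff.mp q.1.parts_sum
    have hp0 : p.1.parts = 0 := Multiset.eq_zero_of_forall_notMem fun x hx =>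
      absurd (hp x hx ▸ p.1.parts_pos hx) (by simp [hp x hx])
    have hq0 : q.1.parts = 0 := Multiset.eq_zero_of_forall_notMem fun x hx =>
      absurd (hq x hx ▸ q.1.parts_pos hx) (by simp [hq x hx])
    rw [hp0, hq0]
  · exact ⟨⟨⟨0, by simp, by simp⟩, by simp⟩⟩

/-- Inserting a `1` into a pow2-partition of `m` gives one of `m+1` containing `1`. -/
def insertEquiv (m : ℕ) : PP m ≃ {p : PP (m + 1) // 1 ∈ p.1.parts} where
  toFun p := ⟨⟨⟨1 ::ₘ p.1.parts,
      fun hi => by rcases Multiset.mem_cons.mp hi with h | h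
                   · omega
                   · exact p.1.parts_pos h,
      by rw [Multiset.sum_cons, p.1.parts_sum, add_comm]⟩,
      fun i hi => by rcases Multiset.mem_cons.mp hi with h | h
                     · exact ⟨0, by simp [h]⟩
                     · exact p.2 i h⟩,
      Multiset.mem_cons_self 1 _⟩
  invFun q := ⟨⟨q.1.1.parts.erase 1,
      fun hi => q.1.1.parts_pos (Multiset.mem_of_mem_erase hi),
      by
        have h := Multiset.cons_erase q.2
        have h2 : (1 ::ₘ q.1.1.parts.erase 1).sum = m + 1 := by rw [h, q.1.1.parts_sum]
        rw [Multiset.sum_cons] at h2; omega⟩,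
      fun i hi => q.1.2 i (Multiset.mem_of_mem_erase hi)⟩
  left_inv p := by
    apply Subtype.ext; apply Nat.Partition.ext
    simp [Multiset.erase_cons_head]
  right_inv q := by
    apply Subtype.ext; apply Subtype.ext; apply Nat.Partition.ext
    simpa using Multiset.cons_erase q.2

lemma card_insert (m : ℕ) :
    Nat.card {p : PP (m + 1) // 1 ∈ p.1.parts} = Nat.card (PP m) :=
  (Nat.card_congr (insertEquiv m)).symm

lemma one_mem_of_odd {n : ℕ} (p : PP n) (hn : ¬ 2 ∣ n) : 1 ∈ p.1.parts := by
  by_contra h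
  apply hn
  rw [← p.1.parts_sum]
  refine Multiset.dvd_sum fun x hx => ?_
  obtain ⟨j, rfl⟩ := p.2 x hx
  cases j with
  | zero => exact absurd hx (by simpa using h)
  | succ j => exact dvd_pow_self 2 (Nat.succ_ne_zero j)

lemma binPartition_odd (n : ℕ) : binPartition (2 * n + 1) = binPartition (2 * n) := by
  rw [binPartition_eq, binPartition_eq, ← card_insert (2 * n)]
  exact Nat.card_congr (Equiv.subtypeUnivEquiv fun p => one_mem_of_odd p (by omega)).symm

/-- Halving: pow2-partitions of `2k` avoiding `1` correspond to pow2-partitions of `k`. -/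
def halveEquiv (k : ℕ) : {p : PP (2 * k) // 1 ∉ p.1.parts} ≃ PP k where
  toFun p := by
    refine ⟨⟨p.1.1.parts.map (· / 2), ?_, ?_⟩, ?_⟩
    · intro i hi
      obtain ⟨x, hx, rfl⟩ := Multiset.mem_map.mp hi
      obtain ⟨j, rfl⟩ := p.1.2 x hx
      have hj : j ≠ 0 := by rintro rfl; exact p.2 (by simpa using hx)
      have : (2:ℕ) ^ j / 2 = 2 ^ (j - 1) := by
        rcases Nat.exists_eq_succ_of_ne_zero hj with ⟨i, rfl⟩
        simp [pow_succ, Nat.mul_div_cancel]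
      rw [this]; positivity
    · have key : Multiset.map (fun x => 2 * (x / 2)) p.1.1.parts = p.1.1.parts := by
        refine Multiset.map_congr rfl (fun x hx => ?_) |>.trans (Multiset.map_id _)
        obtain ⟨j, rfl⟩ := p.1.2 x hx
        have hj : j ≠ 0 := by rintro rfl; exact p.2 (by simpa using hx)
        exact Nat.mul_div_cancel' (dvd_pow_self 2 hj)
      have hsum : (Multiset.map (fun x => 2 * (x / 2)) p.1.1.parts).sum
          = 2 * (Multiset.map (· / 2) p.1.1.parts).sum :=
        Multiset.sum_map_mul_left
      rw [key, p.1.1.parts_sum] at hsum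
      omega
    · intro i hi
      obtain ⟨x, hx, rfl⟩ := Multiset.mem_map.mp hi
      obtain ⟨j, rfl⟩ := p.1.2 x hx
      have hj : j ≠ 0 := by rintro rfl; exact p.2 (by simpa using hx)
      rcases Nat.exists_eq_succ_of_ne_zero hj with ⟨i, rfl⟩
      exact ⟨i, by simp [pow_succ, Nat.mul_div_cancel]⟩
  invFun q := by
    refine ⟨⟨⟨q.1.parts.map (2 * ·), ?_, ?_⟩, ?_⟩, ?_⟩
    · intro i hi
      obtain ⟨x, hx, rfl⟩ := Multiset.mem_map.mp hi
      have := q.1.parts_pos hx; omega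
    · have : (Multiset.map (fun x => 2 * x) q.1.parts).sum
          = 2 * (Multiset.map id q.1.parts).sum := Multiset.sum_map_mul_left
      rw [Multiset.map_id] at this
      rw [this, q.1.parts_sum]
    · intro i hi
      obtain ⟨x, hx, rfl⟩ := Multiset.mem_map.mp hi
      obtain ⟨j, rfl⟩ := q.2 x hx
      exact ⟨j + 1, by rw [pow_succ, mul_comm]⟩
    · intro h
      obtain ⟨x, hx, hx1⟩ := Multiset.mem_map.mp h
      omega
  left_inv p := by
    apply Subtype.ext; apply Subtype.ext; apply Nat.Partition.ext
    show Multiset.map _ (Multiset.map _ _) = _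
    rw [Multiset.map_map]
    refine Multiset.map_congr rfl (fun x hx => ?_) |>.trans (Multiset.map_id _)
    obtain ⟨j, rfl⟩ := p.1.2 x hx
    have hj : j ≠ 0 := by rintro rfl; exact p.2 (by simpa using hx)
    exact Nat.mul_div_cancel' (dvd_pow_self 2 hj)
  right_inv q := by
    apply Subtype.ext; apply Nat.Partition.ext
    show Multiset.map _ (Multiset.map _ _) = _
    rw [Multiset.map_map]
    refine Multiset.map_congr rfl (fun x hx => ?_) |>.trans (Multiset.map_id _)
    exact Nat.mul_div_cancel_left x (by norm_num)

lemma binPartition_even (n : ℕ) :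
    binPartition (2 * n + 2) = binPartition (2 * n + 1) + binPartition (n + 1) := by
  classical
  rw [binPartition_eq (2 * n + 2)]
  rw [Nat.card_congr (Equiv.sumCompl (fun p : PP (2 * n + 2) => 1 ∈ p.1.parts)).symm,
    Nat.card_sum]
  congr 1
  · rw [show 2 * n + 2 = (2 * n + 1) + 1 from rfl, card_insert, binPartition_eq]
  · rw [binPartition_eq (n + 1)]
    have : (2 * n + 2) = 2 * (n + 1) := by ring
    exact Nat.card_congr (this ▸ halveEquiv (n + 1))


open Finset
noncomputable def S (n : ℕ) : ℕ := ∑ j ∈ range (n + 1), binPartition j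

lemma S_zero : S 0 = 1 := by simp [S, binPartition_zero]

lemma S_succ (n : ℕ) : S (n + 1) = S n + binPartition (n + 1) := by
  rw [S, S, sum_range_succ]

lemma B_two_mul (n : ℕ) : binPartition (2 * n) = S n := by
  induction n with
  | zero => simpa [S_zero] using binPartition_zero
  | succ n ih =>
    have h : 2 * (n + 1) = 2 * n + 2 := by ring
    rw [h, binPartition_even, binPartition_odd, ih, ← S_succ]

lemma S_odd (j : ℕ) : S (2 * j + 1) = S (2 * j) + S j := by
  rw [S_succ, binPartition_odd, B_two_mul]

lemma S_two_mul (k : ℕ) : S (2 * k) = 2 * ∑ j ∈ range k, S j + S k := by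
  induction k with
  | zero => simp
  | succ k ih =>
    have h : 2 * (k + 1) = 2 * k + 1 + 1 := by ring
    rw [h, S_succ, S_odd, ih, sum_range_succ]
    have hB : binPartition (2 * k + 1 + 1) = S (k + 1) := by
      rw [show 2 * k + 1 + 1 = 2 * (k + 1) from by ring, B_two_mul]
    rw [hB]; ring

lemma pair_sum (f : ℕ → ℕ) (k : ℕ) :
    ∑ i ∈ range (2 * k), f i = ∑ i ∈ range k, (f (2 * i) + f (2 * i + 1)) := by
  induction k with
  | zero => simp
  | succ k ih =>
    rw [show 2 * (k + 1) = 2 * k + 1 + 1 from by ring, sum_range_succ, sum_range_succ,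
      ih, sum_range_succ]
    ring

lemma S_four_mul (k : ℕ) :
    S (4 * k) = S k + 8 * ∑ j ∈ range k, ((∑ i ∈ range j, S i) + S j) := by
  have h1 : ∑ j ∈ range (2 * k), S j
      = ∑ j ∈ range k, (4 * (∑ i ∈ range j, S i) + 3 * S j) := by
    rw [pair_sum]
    refine sum_congr rfl fun j _ => ?_
    rw [S_odd, S_two_mul]; ring
  have h2 : ∑ j ∈ range k, (4 * (∑ i ∈ range j, S i) + 3 * S j) + ∑ j ∈ range k, S j
      = 4 * ∑ j ∈ range k, ((∑ i ∈ range j, S i) + S j) := by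
    rw [mul_sum, ← sum_add_distrib]
    exact sum_congr rfl fun j _ => by ring
  rw [show 4 * k = 2 * (2 * k) from by ring, S_two_mul, S_two_mul, h1]
  omega

lemma S_pow_mod (j : ℕ) : S (2 ^ (2 * j)) % 8 = 2 ∧ S (2 ^ (2 * j + 1)) % 8 = 4 := by
  induction j with
  | zero =>
    have hB1 : binPartition 1 = 1 := by simpa [binPartition_zero] using binPartition_odd 0
    have hS1 : S 1 = 2 := by rw [S_succ, S_zero, hB1]
    have hS2 : S 2 = 4 := by
      rw [show (2:ℕ) = 1 + 1 from rfl, S_succ, hS1,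
        show (1:ℕ) + 1 = 2 * 1 from rfl, B_two_mul, hS1]
    constructor
    · simpa [hS1] using rfl
    · simpa [hS2] using rfl
  | succ j ih =>
    constructor
    · rw [show 2 * (j + 1) = 2 * j + 2 from by ring,
        show (2:ℕ) ^ (2 * j + 2) = 4 * 2 ^ (2 * j) from by ring, S_four_mul,
        Nat.add_mul_mod_self_left]
      exact ih.1
    · rw [show 2 * (j + 1) + 1 = (2 * j + 1) + 2 from by ring,
        show (2:ℕ) ^ (2 * j + 1 + 2) = 4 * 2 ^ (2 * j + 1) from by ring, S_four_mul,
        Nat.add_mul_mod_self_left]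
      exact ih.2

end BinPf

open BinPf in
theorem binPartition_pow_two_mod_eight (m : ℕ) (hm : 1 ≤ m) :
    (Odd m → binPartition (2 ^ m) % 8 = 2) ∧
    (Even m → 2 ≤ m → binPartition (2 ^ m) % 8 = 4) := by
  constructor
  · rintro ⟨j, rfl⟩
    rw [show (2:ℕ) ^ (2 * j + 1) = 2 * 2 ^ (2 * j) from by ring, B_two_mul]
    exact (S_pow_mod j).1
  · rintro ⟨j, rfl⟩ h2
    obtain ⟨i, rfl⟩ : ∃ i, j = i + 1 := ⟨j - 1, by omega⟩
    rw [show (2:ℕ) ^ (i + 1 + (i + 1)) = 2 * 2 ^ (2 * i + 1) from by ring, B_two_mul]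
    exact (S_pow_mod i).2
end

section
/- In the polynomial ring R = F_2[u_0, u_1, u_2, …] with the derivation Sq¹ given by Sq¹(u_0) = u_1, Sq¹(u_1) = 0, Sq¹(u_j) = u_{j-1}² for j ≥ 2, define w_0 = u_0, w_1 = u_1, w_2 = u_0u_1 + u_2, and w_j = u_1^{2^{j-2}} u_{j-2} + u_0^{2^{j-2}} u_{j-1} + u_j for j ≥ 3. Then Sq¹(w_0) = w_1, Sq¹(w_1) = 0, Sq¹(w_2) = 0, and Sq¹(w_j) = w_{j-1}² for all j ≥ 3. -/
open MvPolynomial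

noncomputable def u (j : ℕ) : MvPolynomial ℕ (ZMod 2) := X j

/-- The elements `w_j`. -/
noncomputable def w (j : ℕ) : MvPolynomial ℕ (ZMod 2) :=
  if j = 0 then u 0
  else if j = 1 then u 1
  else if j = 2 then u 0 * u 1 + u 2
  else u 1 ^ 2 ^ (j - 2) * u (j - 2) + u 0 ^ 2 ^ (j - 2) * u (j - 1) + u j

lemma deriv_even_pow
    (D : Derivation (ZMod 2) (MvPolynomial ℕ (ZMod 2)) (MvPolynomial ℕ (ZMod 2)))
    (a : MvPolynomial ℕ (ZMod 2)) (n : ℕ) (hn : Even n) : D (a ^ n) = 0 := by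
  rw [Derivation.leibniz_pow, ← Nat.cast_smul_eq_nsmul (ZMod 2) n,
    (ZMod.natCast_eq_zero_iff n 2).mpr hn.two_dvd, zero_smul]

lemma sq_add (a b : MvPolynomial ℕ (ZMod 2)) : (a + b) ^ 2 = a ^ 2 + b ^ 2 :=
  CharTwo.add_sq a b

lemma w_eq (j : ℕ) (h : 3 ≤ j) :
    w j = u 1 ^ 2 ^ (j - 2) * u (j - 2) + u 0 ^ 2 ^ (j - 2) * u (j - 1) + u j := by
  simp only [w, if_neg (by omega : j ≠ 0), if_neg (by omega : j ≠ 1),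
    if_neg (by omega : j ≠ 2)]

theorem sq1_w
    (Sq1 : Derivation (ZMod 2) (MvPolynomial ℕ (ZMod 2)) (MvPolynomial ℕ (ZMod 2)))
    (h0 : Sq1 (u 0) = u 1) (h1 : Sq1 (u 1) = 0)
    (hj : ∀ j : ℕ, 2 ≤ j → Sq1 (u j) = (u (j - 1)) ^ 2) :
    Sq1 (w 0) = w 1 ∧ Sq1 (w 1) = 0 ∧ Sq1 (w 2) = 0 ∧
      ∀ j : ℕ, 3 ≤ j → Sq1 (w j) = (w (j - 1)) ^ 2 := by
  have h2 := hj 2 (by norm_num)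
  norm_num at h2
  have hw2 : w 2 = u 0 * u 1 + u 2 := by simp [w]
  refine ⟨by simpa [w] using h0, by simpa [w] using h1, ?_, ?_⟩
  · rw [hw2, Derivation.map_add, Derivation.leibniz, h0, h1, h2]
    simp only [smul_eq_mul, mul_zero, zero_add]
    rw [← sq]
    exact CharTwo.add_self_eq_zero _
  · intro j hj3
    rcases Nat.lt_or_ge j 4 with h4 | h4
    · interval_cases j
      rw [w_eq 3 (by norm_num), show (3:ℕ) - 2 = 1 from rfl, show (3:ℕ) - 1 = 2 from rfl,
        hw2, Derivation.map_add, Derivation.map_add, Derivation.leibniz,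
        Derivation.leibniz, h1, h2, hj 3 (by norm_num),
        deriv_even_pow _ _ _ (by decide), deriv_even_pow _ _ _ (by decide)]
      norm_num [smul_eq_mul]
      rw [sq_add, mul_pow]
    · obtain ⟨k, rfl⟩ := Nat.exists_eq_add_of_le h4
      rw [show 4 + k = k + 4 from by ring]
      rw [w_eq (k + 4) (by omega), w_eq (k + 4 - 1) (by omega)]
      simp only [show k + 4 - 2 = k + 2 from rfl, show k + 4 - 1 = k + 3 from rfl,
        show k + 3 - 2 = k + 1 from rfl, show k + 3 - 1 = k + 2 from rfl]
      rw [Derivation.map_add, Derivation.map_add, Derivation.leibniz, Derivation.leibniz]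
      rw [deriv_even_pow _ _ _ (by simp [Nat.even_pow]),
        deriv_even_pow _ _ _ (by simp [Nat.even_pow]),
        hj (k + 2) (by omega), hj (k + 3) (by omega), hj (k + 3 + 1) (by omega)]
      norm_num [smul_eq_mul]
      rw [sq_add, sq_add, mul_pow, mul_pow, ← pow_mul, ← pow_mul,
        show 2 ^ (k + 1) * 2 = 2 ^ (k + 2) from (pow_succ 2 (k + 1)).symm]
end

section
/- Let q(k) denote the number of tuples (e_3, …, e_k) of nonnegative integers with ∑_{j=3}^k e_j 2^j = 2^k. Then q(k) ≡ 2 (mod 8) if k is even and q(k) ≡ 4 (mod 8) if k is odd, for all k ≥ 5. -/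
/-!
Write `b(n)` (`binPart n`) for the number of binary partitions of `n`. Dividing every weight `2^j`
by `8` identifies the tuples with the binary partitions of `2^(k-3)`, so the count is
`b(2^(k-3))`. Stripping the parts equal to `1` gives `b(n) = ∑_{t ≤ n/2} b(t)`, hence
`b(2m+1) = b(2m)` and `b(2m+2) = b(2m) + b(m+1)`. These make `b(n)` even for `n ≥ 2` and give
Churchhouse's congruence `b(8m) ≡ b(2m) (mod 8)`, which reduces `b(2^m) mod 8` to `b(2) = 2` and
`b(4) = 4`.
-/

open Finset

def binPart : ℕ → ℕ
  | 0 => 1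
  | n + 1 => ∑ t : Fin ((n + 1) / 2 + 1), binPart t
decreasing_by omega

@[simp]
theorem binPart_zero : binPart 0 = 1 := by
  rw [binPart]

theorem binPart_eq_sum (n : ℕ) : binPart n = ∑ t : Fin (n / 2 + 1), binPart t := by
  cases n with
  | zero => simp
  | succ n => rw [binPart]

theorem binPart_eq_sum_range (n : ℕ) : binPart n = ∑ t ∈ range (n / 2 + 1), binPart t := by
  rw [binPart_eq_sum, Fin.sum_univ_eq_sum_range binPart]

theorem binPart_two_mul_add_one (m : ℕ) : binPart (2 * m + 1) = binPart (2 * m) := by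
  rw [binPart_eq_sum_range, binPart_eq_sum_range (2 * m)]
  congr 3; omega

theorem binPart_two_mul_add_two (m : ℕ) :
    binPart (2 * m + 2) = binPart (2 * m) + binPart (m + 1) := by
  rw [binPart_eq_sum_range, binPart_eq_sum_range (2 * m),
    show (2 * m + 2) / 2 = m + 1 by omega, show 2 * m / 2 = m by omega, sum_range_succ]

theorem binPart_two : binPart 2 = 2 := by
  simpa [binPart_two_mul_add_one 0] using binPart_two_mul_add_two 0

theorem binPart_four : binPart 4 = 4 := by
  simpa [binPart_two] using binPart_two_mul_add_two 1

theorem even_binPart {n : ℕ} (hn : 2 ≤ n) : Even (binPart n) := by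
  induction n using Nat.strong_induction_on with
  | _ n ih =>
    obtain ⟨m, rfl | rfl⟩ : ∃ m, n = 2 * m + 2 ∨ n = 2 * m + 3 :=
      ⟨(n - 2) / 2, by omega⟩
    · rw [binPart_two_mul_add_two]
      rcases Nat.eq_zero_or_pos m with rfl | hm
      · simp [binPart_two_mul_add_one 0]
      · exact (ih _ (by omega) (by omega)).add (ih _ (by omega) (by omega))
    · rw [show 2 * m + 3 = 2 * (m + 1) + 1 by ring, binPart_two_mul_add_one]
      exact ih _ (by omega) (by omega)

theorem binPart_eight_mul_add_eight (m : ℕ) :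
    binPart (8 * m + 8) + binPart (2 * m) =
      binPart (8 * m) + binPart (2 * m + 2) + 4 * (binPart (4 * m) + binPart (2 * m)) := by
  have e1 := binPart_two_mul_add_two (4 * m + 3)
  have e2 := binPart_two_mul_add_two (4 * m + 2)
  have e3 := binPart_two_mul_add_two (4 * m + 1)
  have e4 := binPart_two_mul_add_two (4 * m)
  have e5 := binPart_two_mul_add_two (2 * m + 1)
  have e6 := binPart_two_mul_add_two (2 * m)
  have o1 := binPart_two_mul_add_one (2 * m + 1)
  have o2 := binPart_two_mul_add_one (2 * m)
  have o3 := binPart_two_mul_add_one m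
  ring_nf at *
  omega

theorem binPart_eight_mul_modEq (m : ℕ) : binPart (8 * m) ≡ binPart (2 * m) [MOD 8] := by
  induction m with
  | zero => rfl
  | succ m ih =>
    have hkey := binPart_eight_mul_add_eight m
    obtain ⟨c, hc⟩ : Even (binPart (4 * m) + binPart (2 * m)) := by
      rcases Nat.eq_zero_or_pos m with rfl | hm
      · exact ⟨binPart 0, rfl⟩
      · exact (even_binPart (by omega)).add (even_binPart (by omega))
    unfold Nat.ModEq at *
    rw [show 8 * (m + 1) = 8 * m + 8 by ring, show 2 * (m + 1) = 2 * m + 2 by ring]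
    omega

theorem binPart_two_pow_mod_eight {m : ℕ} (hm : 1 ≤ m) :
    binPart (2 ^ m) % 8 = if Even m then 4 else 2 := by
  induction m using Nat.strong_induction_on with
  | _ m ih =>
    match m, hm with
    | 1, _ => simp [binPart_two]
    | 2, _ => simp [binPart_four]
    | m + 3, _ =>
      rw [show 2 ^ (m + 3) = 8 * 2 ^ m by ring, binPart_eight_mul_modEq, ← pow_succ',
        ih (m + 1) (by omega) (by omega)]
      simp [Nat.even_add, parity_simps]

/-- Binary partitions of `n` into parts below `2 ^ k`; `e i` counts the parts equal to `2 ^ i`. -/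
def BinRep (k n : ℕ) : Type := {e : Fin k → ℕ // ∑ i, e i * 2 ^ (i : ℕ) = n}

theorem le_sum_mul_two_pow {k : ℕ} (e : Fin k → ℕ) (i : Fin k) :
    e i ≤ ∑ j, e j * 2 ^ (j : ℕ) :=
  calc e i ≤ e i * 2 ^ (i : ℕ) := Nat.le_mul_of_pos_right _ (by positivity)
    _ ≤ _ :=
      single_le_sum (f := fun j => e j * 2 ^ (j : ℕ)) (fun j _ => Nat.zero_le _) (mem_univ i)

instance (k n : ℕ) : Finite (BinRep k n) :=
  Finite.of_injective
    (fun e i =>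
      (⟨e.1 i, Nat.lt_succ_of_le ((le_sum_mul_two_pow e.1 i).trans_eq e.2)⟩ : Fin (n + 1)))
    fun _ _ h => Subtype.ext <| funext fun i => congrArg Fin.val (congrFun h i)

theorem sum_mul_two_pow_eq_head_add {k : ℕ} (e : Fin (k + 1) → ℕ) :
    ∑ i, e i * 2 ^ (i : ℕ) = e 0 + 2 * ∑ i, Fin.tail e i * 2 ^ (i : ℕ) := by
  simp only [Fin.sum_univ_succ, mul_sum, Fin.val_zero, pow_zero, mul_one, Fin.val_succ, pow_succ,
    Fin.tail]
  congr 1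
  exact sum_congr rfl fun i _ => by ring

def binRepSuccEquiv (k n : ℕ) : BinRep (k + 1) n ≃ Σ t : Fin (n / 2 + 1), BinRep k t where
  toFun e := ⟨⟨∑ i, Fin.tail e.1 i * 2 ^ (i : ℕ), by
      have := e.2; rw [sum_mul_two_pow_eq_head_add] at this; omega⟩,
    Fin.tail e.1, rfl⟩
  invFun p := ⟨Fin.cons (n - 2 * p.1) p.2.1, by
    rw [sum_mul_two_pow_eq_head_add, Fin.cons_zero, Fin.tail_cons, p.2.2]; omega⟩
  left_inv e := by
    obtain ⟨e, he⟩ := e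
    refine Subtype.ext ?_
    dsimp only
    rw [sum_mul_two_pow_eq_head_add] at he
    conv_rhs => rw [← Fin.cons_self_tail e]
    congr 1
    omega
  right_inv p := by
    obtain ⟨t, f, hf⟩ := p
    exact Sigma.subtype_ext (Fin.ext <| by simpa [Fin.tail_cons] using hf) rfl

theorem card_binRep {k n : ℕ} (hn : n < 2 ^ k) : Nat.card (BinRep k n) = binPart n := by
  induction k generalizing n with
  | zero =>
    obtain rfl : n = 0 := by simpa using hn
    have : Unique (BinRep 0 0) :=
      ⟨⟨⟨finZeroElim, by simp⟩⟩, fun _ => Subtype.ext (funext finZeroElim)⟩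
    simp
  | succ k ih =>
    rw [Nat.card_congr (binRepSuccEquiv k n), Nat.card_sigma, binPart_eq_sum]
    exact sum_congr rfl fun t _ => ih (by rw [pow_succ] at hn; omega)

theorem sum_Icc_mul_two_pow (a b : ℕ) (e : ℕ → ℕ) :
    ∑ j ∈ Icc a b, e j * 2 ^ j =
      2 ^ a * ∑ i : Fin (b + 1 - a), e (a + i) * 2 ^ (i : ℕ) := by
  rw [← Ico_add_one_right_eq_Icc, sum_Ico_eq_sum_range,
    Fin.sum_univ_eq_sum_range (fun i => e (a + i) * 2 ^ i), mul_sum]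
  exact sum_congr rfl fun i _ => by ring

def iccTupleEquivBinRep (a b n : ℕ) :
    {e : ℕ → ℕ // (∀ j, j ∉ Icc a b → e j = 0) ∧
        ∑ j ∈ Icc a b, e j * 2 ^ j = 2 ^ a * n} ≃ BinRep (b + 1 - a) n where
  toFun e := ⟨fun i => e.1 (a + i), by
    have := e.2.2
    rw [sum_Icc_mul_two_pow] at this
    exact Nat.eq_of_mul_eq_mul_left (by positivity) this⟩
  invFun f := ⟨fun j => if h : a ≤ j ∧ j < b + 1 then f.1 ⟨j - a, by omega⟩ else 0, by
    refine ⟨fun j hj => dif_neg (by simp only [mem_Icc] at hj; omega), ?_⟩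
    rw [sum_Icc_mul_two_pow]
    refine congrArg (2 ^ a * ·) ((sum_congr rfl fun i _ => ?_).trans f.2)
    rw [dif_pos (by omega)]
    simp⟩
  left_inv e := by
    obtain ⟨e, he, -⟩ := e
    refine Subtype.ext (funext fun j => ?_)
    dsimp only
    split_ifs with h
    · congr 1; omega
    · exact (he j (by simp only [mem_Icc]; omega)).symm
  right_inv f := by
    refine Subtype.ext (funext fun i => ?_)
    dsimp only
    rw [dif_pos (by omega)]
    simp

/-- Let `q k` be the number of tuples `(e₃,…,e_k)` with `∑ e_j 2^j = 2^k`. Then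
`q k ≡ 2 (mod 8)` if `k` is even and `q k ≡ 4 (mod 8)` if `k` is odd, for `k ≥ 5`. -/
theorem card_tuples_mod_eight (k : ℕ) (hk : 5 ≤ k) :
    (Even k → Nat.card {e : ℕ → ℕ // (∀ j, j ∉ Finset.Icc 3 k → e j = 0) ∧
        ∑ j ∈ Finset.Icc 3 k, e j * 2 ^ j = 2 ^ k} % 8 = 2) ∧
    (Odd k → Nat.card {e : ℕ → ℕ // (∀ j, j ∉ Finset.Icc 3 k → e j = 0) ∧
        ∑ j ∈ Finset.Icc 3 k, e j * 2 ^ j = 2 ^ k} % 8 = 4) := by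
  have hcard : Nat.card {e : ℕ → ℕ // (∀ j, j ∉ Finset.Icc 3 k → e j = 0) ∧
      ∑ j ∈ Finset.Icc 3 k, e j * 2 ^ j = 2 ^ k} = binPart (2 ^ (k - 3)) := by
    rw [show 2 ^ k = 2 ^ 3 * 2 ^ (k - 3) by rw [← pow_add]; congr 1; omega,
      Nat.card_congr (iccTupleEquivBinRep 3 k _), card_binRep]
    exact Nat.pow_lt_pow_right (by norm_num) (by omega)
  have hparity : Even (k - 3) ↔ ¬Even k := by
    rw [Nat.even_sub (by omega)]
    simp [show ¬Even 3 by decide]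
  rw [hcard, binPart_two_pow_mod_eight (by omega)]
  exact ⟨fun he => by simp [hparity, he],
    fun ho => by simp [hparity, Nat.not_even_iff_odd.mpr ho]⟩
end
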